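/- arXiv:1710.00948 — 14 statements merged into one kernel-verified Lean document; each statement's English description precedes it below -/
import Mathlib

section
/- Let A be the 2-dimensional algebra over a field F of characteristic ≠ 2,3 with basis e1, e2 and multiplication e1·e1 = (1/2)e1, e1·e2 = (1/2)e2, e2·e1 = (1/2)e2, e2·e2 = e1. Then A satisfies the Jordan identity (u·v)·(u·u) = u·(v·(u·u)) for all u, v in A. -/
/-! The algebra is associative: the structure constants `(c 0 0 d // 0 c c 0)` give, for `c ≠ 0`,
`F[t]/(t² - c d)` with unit `e1 / c` and `t = e2`, and associativity is a polynomial identity in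
`c` and `d`. The Jordan identity is the instance `w = u u` of `(u v) w = u (v w)`. -/

/-- Multiplication on `F × F` of the 2-dimensional algebra with matrix of structure
constants `(a1 a2 a3 a4 // b1 b2 b3 b4)`: here `e1·e1 = a1·e1 + b1·e2`,
`e1·e2 = a2·e1 + b2·e2`, `e2·e1 = a3·e1 + b3·e2`, `e2·e2 = a4·e1 + b4·e2`. -/
def mul2 {F : Type*} [Field F] (a1 a2 a3 a4 b1 b2 b3 b4 : F) (u v : F × F) : F × F :=
  (a1 * u.1 * v.1 + a2 * u.1 * v.2 + a3 * u.2 * v.1 + a4 * u.2 * v.2,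
   b1 * u.1 * v.1 + b2 * u.1 * v.2 + b3 * u.2 * v.1 + b4 * u.2 * v.2)

theorem mul2_quadratic_assoc {F : Type*} [Field F] (c d : F) (u v w : F × F) :
    mul2 c 0 0 d 0 c c 0 (mul2 c 0 0 d 0 c c 0 u v) w =
      mul2 c 0 0 d 0 c c 0 u (mul2 c 0 0 d 0 c c 0 v w) := by
  ext <;> simp only [mul2] <;> ring

theorem stmt0_general (F : Type*) [Field F] :
    ∀ u v : F × F, mul2 ((1:F)/2) (0) (0) (1) (0) ((1:F)/2) ((1:F)/2) (0) (mul2 ((1:F)/2) (0) (0) (1) (0) ((1:F)/2) ((1:F)/2) (0) u v) (mul2 ((1:F)/2) (0) (0) (1) (0) ((1:F)/2) ((1:F)/2) (0) u u) = mul2 ((1:F)/2) (0) (0) (1) (0) ((1:F)/2) ((1:F)/2) (0) u (mul2 ((1:F)/2) (0) (0) (1) (0) ((1:F)/2) ((1:F)/2) (0) v (mul2 ((1:F)/2) (0) (0) (1) (0) ((1:F)/2) ((1:F)/2) (0) u u)) :=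
  fun u v => mul2_quadratic_assoc _ _ u v _

theorem stmt0 (F : Type*) [Field F] (h2 : (2 : F) ≠ 0) (h3 : (3 : F) ≠ 0) :
    ∀ u v : F × F, mul2 ((1:F)/2) (0) (0) (1) (0) ((1:F)/2) ((1:F)/2) (0) (mul2 ((1:F)/2) (0) (0) (1) (0) ((1:F)/2) ((1:F)/2) (0) u v) (mul2 ((1:F)/2) (0) (0) (1) (0) ((1:F)/2) ((1:F)/2) (0) u u) = mul2 ((1:F)/2) (0) (0) (1) (0) ((1:F)/2) ((1:F)/2) (0) u (mul2 ((1:F)/2) (0) (0) (1) (0) ((1:F)/2) ((1:F)/2) (0) v (mul2 ((1:F)/2) (0) (0) (1) (0) ((1:F)/2) ((1:F)/2) (0) u u)) :=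
  stmt0_general F
end

section
/- Let A be the 2-dimensional algebra over a field F of characteristic ≠ 2,3 with basis e1, e2 and multiplication e1·e1 = (1/2)e1 + 0·e2, e1·e2 = -(1/2)e2, e2·e1 = (1/2)e2, e2·e2 = e1. Then A satisfies the Jordan identity (u·v)·u² = u·(v·u²) for all u, v in A, but A is not commutative. -/
theorem stmt1 (F : Type*) [Field F] (h2 : (2 : F) ≠ 0) (h3 : (3 : F) ≠ 0) :
    (∀ u v : F × F, mul2 ((1:F)/2) (0) (0) (1) (0) (-(1:F)/2) ((1:F)/2) (0) (mul2 ((1:F)/2) (0) (0) (1) (0) (-(1:F)/2) ((1:F)/2) (0) u v) (mul2 ((1:F)/2) (0) (0) (1) (0) (-(1:F)/2) ((1:F)/2) (0) u u) = mul2 ((1:F)/2) (0) (0) (1) (0) (-(1:F)/2) ((1:F)/2) (0) u (mul2 ((1:F)/2) (0) (0) (1) (0) (-(1:F)/2) ((1:F)/2) (0) v (mul2 ((1:F)/2) (0) (0) (1) (0) (-(1:F)/2) ((1:F)/2) (0) u u))) ∧ ¬ (∀ u v : F × F, mul2 ((1:F)/2) (0) (0) (1) (0) (-(1:F)/2) ((1:F)/2)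 (0) u v = mul2 ((1:F)/2) (0) (0) (1) (0) (-(1:F)/2) ((1:F)/2) (0) v u) := by
  constructor
  · rintro ⟨x,y⟩ ⟨z,w⟩
    simp only [mul2, Prod.mk.injEq]
    constructor <;> ring
  · intro h
    have := congrArg Prod.snd (h (1,0) (0,1))
    simp only [mul2] at this
    ring_nf at this
    have h4 : (2:F)*2⁻¹ = 0 := by linear_combination -this
    rw [mul_inv_cancel₀ h2] at h4
    exact one_ne_zero h4
end

section
/- For any α ∈ F with F a field of characteristic ≠ 2,3, the 2-dimensional algebra with basis e1, e2 and multiplication e1·e1 = α·e1, e1·e2 = (2α-1)·e2, e2·e1 = (1-α)·e2, e2·e2 = 0 satisfies the Jordan identity (u·v)·u² = u·(v·u²) for all u,v. -/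
theorem stmt2 (F : Type*) [Field F] (h2 : (2 : F) ≠ 0) (h3 : (3 : F) ≠ 0) (α : F) :
    ∀ u v : F × F, mul2 (α) (0) (0) (0) (0) (2*α-1) (1-α) (0) (mul2 (α) (0) (0) (0) (0) (2*α-1) (1-α) (0) u v) (mul2 (α) (0) (0) (0) (0) (2*α-1) (1-α) (0) u u) = mul2 (α) (0) (0) (0) (0) (2*α-1) (1-α) (0) u (mul2 (α) (0) (0) (0) (0) (2*α-1) (1-α) (0) v (mul2 (α) (0) (0) (0) (0) (2*α-1) (1-α) (0) u u)) := by
  intro u v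
  simp only [mul2, Prod.mk.injEq]
  constructor <;> ring
end

section
/- Let F be a field of characteristic ≠ 2,3 and α, β ∈ F. The 2-dimensional algebra with basis e1, e2 and multiplication e1·e1 = α·e1, e1·e2 = β·e2, e2·e1 = (1-α)·e2, e2·e2 = 0 satisfies the Jordan identity (u·v)·u² = u·(v·u²) for all u,v if and only if -α + 3α² - 2α³ - αβ + α²β + β² - 2αβ² + β³ = 0. -/
theorem stmt3 (F : Type*) [Field F] (h2 : (2 : F) ≠ 0) (h3 : (3 : F) ≠ 0) (α β : F) :
    (∀ u v : F × F, mul2 (α) (0) (0) (0) (0) (β) (1-α) (0) (mul2 (α) (0) (0) (0) (0) (β) (1-α) (0) u v) (mul2 (α) (0) (0) (0) (0) (β) (1-α) (0) u u) = mul2 (α) (0) (0) (0) (0) (β) (1-α) (0) u (mul2 (α) (0) (0) (0) (0) (β) (1-α) (0) v (mul2 (α) (0) (0) (0) (0) (β) (1-α) (0) u u))) ↔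
      -α + 3*α^2 - 2*α^3 - α*β + α^2*β + β^2 - 2*α*β^2 + β^3 = 0 := by
  constructor
  · intro h
    have := h (1, 1) (1, 0)
    simp only [mul2, Prod.ext_iff, Prod.fst, Prod.snd] at this
    obtain ⟨h1, hsnd⟩ := this
    linear_combination -hsnd
  · intro hP u v
    simp only [mul2, Prod.ext_iff]
    constructor
    · ring
    · linear_combination (-(u.1^2 * u.2 * v.1)) * hP
end

section
/- Let F be a field of characteristic ≠ 2,3 and α ∈ F. The 2-dimensional algebra with basis e1, e2 and multiplication e1·e1 = α·e1, e1·e2 = (1-α)·e2, e2·e1 = -α·e2, e2·e2 = 0 satisfies the Jordan identity (u·v)·u² = u·(v·u²) for all u,v if and only if 1 - 5α + 8α² - 6α³ = 0. -/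
theorem stmt5 (F : Type*) [Field F] (h2 : (2 : F) ≠ 0) (h3 : (3 : F) ≠ 0) (α : F) :
    (∀ u v : F × F, mul2 (α) (0) (0) (0) (0) (1-α) (-α) (0) (mul2 (α) (0) (0) (0) (0) (1-α) (-α) (0) u v) (mul2 (α) (0) (0) (0) (0) (1-α) (-α) (0) u u) = mul2 (α) (0) (0) (0) (0) (1-α) (-α) (0) u (mul2 (α) (0) (0) (0) (0) (1-α) (-α) (0) v (mul2 (α) (0) (0) (0) (0) (1-α) (-α) (0) u u))) ↔ 1 - 5*α + 8*α^2 - 6*α^3 = 0 := by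
  constructor
  · intro h
    have := h (1,1) (1,0)
    simp only [mul2, Prod.mk.injEq] at this
    obtain ⟨_, h2⟩ := this
    linear_combination -h2
  · intro h u v
    simp only [mul2, Prod.mk.injEq]
    constructor
    · ring
    · linear_combination (-(u.1^2 * u.2 * v.1)) * h
end

section
/- Let F be a field of characteristic ≠ 2,3 and α ∈ F. The 2-dimensional algebra with basis e1, e2 and multiplication e1·e1 = α·e1 + e2, e1·e2 = (2α-1)·e2, e2·e1 = (1-α)·e2, e2·e2 = 0 satisfies the Jordan identity (u·v)·u² = u·(v·u²) for all u,v if and only if 1 - 5α + 5α² = 0. -/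
theorem stmt8 (F : Type*) [Field F] (h2 : (2 : F) ≠ 0) (h3 : (3 : F) ≠ 0) (α : F) :
    (∀ u v : F × F, mul2 (α) (0) (0) (0) (1) (2*α-1) (1-α) (0) (mul2 (α) (0) (0) (0) (1) (2*α-1) (1-α) (0) u v) (mul2 (α) (0) (0) (0) (1) (2*α-1) (1-α) (0) u u) = mul2 (α) (0) (0) (0) (1) (2*α-1) (1-α) (0) u (mul2 (α) (0) (0) (0) (1) (2*α-1) (1-α) (0) v (mul2 (α) (0) (0) (0) (1) (2*α-1) (1-α) (0) u u))) ↔ 1 - 5*α + 5*α^2 = 0 := by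
  constructor
  · intro h
    have := congrArg Prod.snd (h (1,0) (1,0))
    simp [mul2] at this
    linear_combination -this
  · intro h u v
    obtain ⟨u1,u2⟩ := u
    obtain ⟨v1,v2⟩ := v
    simp only [mul2, Prod.mk.injEq]
    constructor
    · ring
    · linear_combination (-(u1^3*v1)) * h
end

section
/- The 2-dimensional real algebra with basis e1, e2 and multiplication e1·e1 = ((5-√5)/10)·e1 + e2, e1·e2 = (-√5/5)·e2, e2·e1 = ((5+√5)/10)·e2, e2·e2 = 0 satisfies the Jordan identity (u·v)·u² = u·(v·u²) for all u,v. -/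
set_option maxHeartbeats 1000000

theorem stmt9 :
    ∀ u v : ℝ × ℝ, mul2 ((5-Real.sqrt 5)/10) (0) (0) (0) (1) (-(Real.sqrt 5)/5) ((5+Real.sqrt 5)/10) (0) (mul2 ((5-Real.sqrt 5)/10) (0) (0) (0) (1) (-(Real.sqrt 5)/5) ((5+Real.sqrt 5)/10) (0) u v) (mul2 ((5-Real.sqrt 5)/10) (0) (0) (0) (1) (-(Real.sqrt 5)/5) ((5+Real.sqrt 5)/10) (0) u u) = mul2 ((5-Real.sqrt 5)/10) (0) (0) (0) (1) (-(Real.sqrt 5)/5) ((5+Real.sqrt 5)/10) (0) u (mul2 ((5-Real.sqrt 5)/10) (0) (0) (0) (1) (-(Real.sqrt 5)/5) ((5+Real.sqrt 5)/10) (0) v (mul2 ((5-Real.sqrt 5)/10) (0) (0) (0) (1) (-(Real.sqrt 5)/5) ((5+Real.sqrt 5)/10) (0) u u)) := by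
  intro u v
  obtain ⟨x, y⟩ := u
  obtain ⟨z, w⟩ := v
  have hs : Real.sqrt 5 * Real.sqrt 5 = 5 := Real.mul_self_sqrt (by norm_num)
  simp only [mul2, Prod.mk.injEq]
  constructor
  · ring
  · linear_combination (-(x^3*z)/20) * hs
end

section
/- The 2-dimensional algebra over a field F with basis e1, e2 and multiplication e1·e1 = 0, e1·e2 = 0, e2·e1 = e2, e2·e2 = 0 is a Jordan algebra (satisfies (u·v)·u² = u·(v·u²) for all u,v) but is not power associative: there exists u with (u·u)·(u·u) ≠ u·(u·(u·u)) or (u·u)·(u·u) ≠ ((u·u)·u)·u. Specifically, for u = e1 + e2, (u²)·u² ≠ (u²·u)·u. -/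
theorem stmt11 (F : Type*) [Field F] :
    (∀ u v : F × F, mul2 (0) (0) (0) (0) (0) (0) (1) (0) (mul2 (0) (0) (0) (0) (0) (0) (1) (0) u v) (mul2 (0) (0) (0) (0) (0) (0) (1) (0) u u) = mul2 (0) (0) (0) (0) (0) (0) (1) (0) u (mul2 (0) (0) (0) (0) (0) (0) (1) (0) v (mul2 (0) (0) (0) (0) (0) (0) (1) (0) u u))) ∧
      (let u : F × F := (1, 1);
        mul2 (0) (0) (0) (0) (0) (0) (1) (0) (mul2 (0) (0) (0) (0) (0) (0) (1) (0) u u) (mul2 (0) (0) (0) (0) (0) (0) (1) (0) u u) ≠ mul2 (0) (0) (0) (0) (0) (0) (1) (0) (mul2 (0) (0) (0) (0) (0) (0) (1) (0) (mul2 (0) (0) (0) (0) (0) (0) (1) (0) u u) u) u) := by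
  constructor
  · intro u v
    simp only [mul2, Prod.mk.injEq]
    constructor <;> ring
  · simp only [mul2]
    norm_num
end

section
/- For any field F of characteristic ≠ 2,3 and any β₁, β₂ ∈ F, the 2-dimensional algebra with basis e1, e2 and multiplication e1·e1 = β₁·e2, e1·e2 = e1 + β₂·e2, e2·e1 = e1 + e2, e2·e2 = -e2 does NOT satisfy the Jordan identity; i.e., there exist u, v with (u·v)·u² ≠ u·(v·u²). -/
theorem stmt12 (F : Type*) [Field F] (h2 : (2 : F) ≠ 0) (h3 : (3 : F) ≠ 0) (β₁ β₂ : F) :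
    ∃ u v : F × F, mul2 (0) (1) (1) (0) (β₁) (β₂) (1) (-1) (mul2 (0) (1) (1) (0) (β₁) (β₂) (1) (-1) u v) (mul2 (0) (1) (1) (0) (β₁) (β₂) (1) (-1) u u) ≠ mul2 (0) (1) (1) (0) (β₁) (β₂) (1) (-1) u (mul2 (0) (1) (1) (0) (β₁) (β₂) (1) (-1) v (mul2 (0) (1) (1) (0) (β₁) (β₂) (1) (-1) u u)) := by
  by_cases hb1 : β₁ = 0
  · by_cases hb2 : β₂ = 1
    · refine ⟨(1, 1), (0, 1), fun h => ?_⟩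
      have h' := congrArg Prod.fst h
      simp only [mul2, hb1, hb2] at h'
      ring_nf at h'
      exact h2 (by linear_combination -h')
    · refine ⟨(0, 1), (1, 0), fun h => ?_⟩
      have h' := congrArg Prod.snd h
      simp only [mul2] at h'
      ring_nf at h'
      have h2' : 2 * (β₂ - 1) = 0 := by linear_combination -h'
      rcases mul_eq_zero.1 h2' with h | h
      · exact h2 h
      · exact hb2 (by linear_combination h)
  · refine ⟨(1, 0), (0, 1), fun h => ?_⟩
    have h' := congrArg Prod.fst h
    simp only [mul2] at h'
    ring_nf at h'
    have h2' : 2 * β₁ = 0 := by linear_combination h'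
    rcases mul_eq_zero.1 h2' with h | h
    · exact h2 h
    · exact hb1 h
end

section
/- For any field F of characteristic ≠ 2,3 and any α₁, α₂, α₄, β₁ ∈ F, the 2-dimensional algebra with basis e1, e2 and multiplication e1·e1 = α₁·e1 + β₁·e2, e1·e2 = α₂·e1 - α₁·e2, e2·e1 = (α₂+1)·e1 + (1-α₁)·e2, e2·e2 = α₄·e1 - α₂·e2 does NOT satisfy the Jordan identity (u·v)·u² = u·(v·u²) for all u,v. -/
theorem stmt13 (F : Type*) [Field F] (h2 : (2 : F) ≠ 0) (h3 : (3 : F) ≠ 0) (α₁ α₂ α₄ β₁ : F) :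
    ∃ u v : F × F, mul2 (α₁) (α₂) (α₂+1) (α₄) (β₁) (-α₁) (1-α₁) (-α₂) (mul2 (α₁) (α₂) (α₂+1) (α₄) (β₁) (-α₁) (1-α₁) (-α₂) u v) (mul2 (α₁) (α₂) (α₂+1) (α₄) (β₁) (-α₁) (1-α₁) (-α₂) u u) ≠ mul2 (α₁) (α₂) (α₂+1) (α₄) (β₁) (-α₁) (1-α₁) (-α₂) u (mul2 (α₁) (α₂) (α₂+1) (α₄) (β₁) (-α₁) (1-α₁) (-α₂) v (mul2 (α₁) (α₂) (α₂+1) (α₄) (β₁) (-α₁) (1-α₁) (-α₂) u u)) := by 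
  by_contra hcon
  push_neg at hcon
  have H0 := hcon ((1 : F), (0 : F)) ((0 : F), (1 : F))
  simp only [mul2, Prod.mk.injEq] at H0
  obtain ⟨H0a, H0b⟩ := H0
  have H1 := hcon ((0 : F), (1 : F)) ((1 : F), (0 : F))
  simp only [mul2, Prod.mk.injEq] at H1
  obtain ⟨H1a, H1b⟩ := H1
  have H2 := hcon ((1 : F), (1 : F)) ((1 : F), (0 : F))
  simp only [mul2, Prod.mk.injEq] at H2
  obtain ⟨H2a, H2b⟩ := H2
  have H3 := hcon ((1 : F), (1 : F)) ((0 : F), (1 : F))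
  simp only [mul2, Prod.mk.injEq] at H3
  obtain ⟨H3a, H3b⟩ := H3
  have H4 := hcon ((1 : F), (-1 : F)) ((1 : F), (0 : F))
  simp only [mul2, Prod.mk.injEq] at H4
  obtain ⟨H4a, H4b⟩ := H4
  have H5 := hcon ((1 : F), (-1 : F)) ((0 : F), (1 : F))
  simp only [mul2, Prod.mk.injEq] at H5
  obtain ⟨H5a, H5b⟩ := H5
  have h18 : (18 : F) = 0 := by
    linear_combination ((-535 : F) * β₁ + (18 : F) * β₁^2 + (1584 : F) * α₄ + (14829 : F) * α₄ * β₁ + (504 : F) * α₂ + (1260 : F) * α₂ * β₁ + (2268 : F) * α₂ * α₄ + (-3942 : F) * α₂^2 + (108 : F) * α₁ + (3432 : F) * α₁ * β₁ + (-5418 : F) * α₁ * α₄ + (1062 : F) * α₁ * α₂ + (126 : F) * α₁^2) * H0a + ((3486 : F) + (2947 : F) * β₁ + (9306 : F) * α₄ + (17199 : F) * α₄ * β₁ + (1368 : F) * α₄^2 + (9558 : F) * α₂ + (5822 : F) * α₂ * β₁ + (-25396 : F) * α₂ * α₄ + (13458 : F) * α₂^2 + (-529 : F) * α₁ + (2911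 : F) * α₁ * β₁ + (-47259 : F) * α₁ * α₄ + (-11499 : F) * α₁ * α₂ + (-8733 : F) * α₁^2) * H0b + ((5940 : F) + (-3869 : F) * β₁ + (-4024 : F) * β₁^2 + (1512 : F) * α₄ + (-4761 : F) * α₄ * β₁ + (7758 : F) * α₂ + (-19851 : F) * α₂ * β₁ + (-9192 : F) * α₁ + (7427 : F) * α₁ * β₁ + (-6576 : F) * α₁ * α₄ + (-16020 : F) * α₁ * α₂ + (-13608 : F) * α₁^2) * H1a + ((1134 : F) * β₁ + (2947 : F) * β₁^2 + (4464 : F) * α₄ + (-2897 : F) * α₄ * β₁ + (-6750 : F) * α₂ + (-6714 : F) * α₂ * β₁ + (-1512 : F) * α₂ * α₄ + (-8118 : F) * α₂^2 + (-6120 : F) * α₁ + (1905 : F) * α₁ * β₁ + (-3396 : F) * α₁ * α₄ + (-11664 : F) * α₁ * α₂ + (-10188 : F) * α₁^2) * H1b + ((18 : F) + (-18 : F) * β₁ + (8284 : F) * α₄ * β₁ + (-4734 : F) * α₂ + (-72 : F) * α₂ * β₁ + (-18 : F) * α₁ + (2911 : F) * α₁ * β₁ + (1740 : F) * α₁ *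 α₄ + (2772 : F) * α₁ * α₂) * H2a + ((-5976 : F) * α₄ + (2412 : F) * α₂ + (1314 : F) * α₂^2 + (18 : F) * α₁ + (3468 : F) * α₁ * α₄) * H2b + ((-18 : F) * β₁^2 + (-1512 : F) * α₄ * β₁ + (-1890 : F) * α₂ + (-72 : F) * α₁^2) * H3a + ((4891 : F) * α₄ * β₁ + (-1812 : F) * α₁ * α₄) * H4a + ((-378 : F) * α₂ + (-539 : F) * α₁ * β₁) * H5a
  have : (18 : F) = 2 * 3 * 3 := by norm_num
  rw [this] at h18
  rcases mul_eq_zero.mp h18 with h | h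
  · rcases mul_eq_zero.mp h with h' | h'
    · exact h2 h'
    · exact h3 h'
  · exact h3 h
end

section
/- Let F be a field of characteristic ≠ 2,3 and α₁, β₁, β₂ ∈ F. The 2-dimensional algebra with basis e1, e2 and multiplication e1·e1 = α₁·e1 + β₁·e2, e1·e2 = β₂·e2, e2·e1 = (1-α₁)·e2, e2·e2 = e1 satisfies the Jordan identity (u·v)·u² = u·(v·u²) for all u,v if and only if β₁ = 0, α₁ = 1/2, and β₂ ∈ {1/2, -1/2}. -/
theorem stmt14 (F : Type*) [Field F] (h2 : (2 : F) ≠ 0) (h3 : (3 : F) ≠ 0) (α₁ β₁ β₂ : F) :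
    (∀ u v : F × F, mul2 (α₁) (0) (0) (1) (β₁) (β₂) (1-α₁) (0) (mul2 (α₁) (0) (0) (1) (β₁) (β₂) (1-α₁) (0) u v) (mul2 (α₁) (0) (0) (1) (β₁) (β₂) (1-α₁) (0) u u) = mul2 (α₁) (0) (0) (1) (β₁) (β₂) (1-α₁) (0) u (mul2 (α₁) (0) (0) (1) (β₁) (β₂) (1-α₁) (0) v (mul2 (α₁) (0) (0) (1) (β₁) (β₂) (1-α₁) (0) u u))) ↔
      β₁ = 0 ∧ α₁ = 1/2 ∧ (β₂ = 1/2 ∨ β₂ = -(1/2)) := by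
  constructor
  · intro h
    have h1 := congrArg Prod.snd (h (1,0) (0,1))
    have h4 := congrArg Prod.fst (h (0,1) (0,1))
    simp only [mul2] at h1 h4
    have hb1 : β₁ = 0 := by
      have e : β₁ ^ 2 = 0 := by linear_combination -h1
      exact pow_eq_zero_iff (n := 2) (by norm_num) |>.mp e
    have ha : α₁ = 1/2 := by
      field_simp
      linear_combination h4
    have ha₂ : 2 * α₁ = 1 := by rw [ha, mul_one_div]; exact div_self h2
    have h5 := congrArg Prod.fst (h (1,1) (1,0))
    simp only [mul2] at h5
    rw [hb1] at h5
    refine ⟨hb1, ha, ?_⟩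
    have hsq : (2 * β₂ - 1) * (2 * β₂ + 1) = 0 := by
      linear_combination -4 * h5 + (2 * α₁ - 3) * ha₂
    rcases mul_eq_zero.mp hsq with h' | h'
    · left; field_simp; linear_combination h'
    · right; field_simp; linear_combination h'
  · have key : ∀ a b : F, 2 * a = 1 → b * b = a * a →
        ∀ u v : F × F, mul2 a 0 0 1 0 b (1-a) 0 (mul2 a 0 0 1 0 b (1-a) 0 u v)
            (mul2 a 0 0 1 0 b (1-a) 0 u u) =
          mul2 a 0 0 1 0 b (1-a) 0 u
            (mul2 a 0 0 1 0 b (1-a) 0 v (mul2 a 0 0 1 0 b (1-a) 0 u u)) := by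
      intro a b ha hb u v
      simp only [mul2, Prod.mk.injEq]
      constructor
      · linear_combination (-(u.1*u.2*u.2*v.1) + u.1*u.1*u.2*v.2) * hb +
          (u.2*u.2*u.2*v.2 - u.1*u.2*u.2*v.1 - b*u.1*u.1*u.2*v.2 + 2*a*u.1*u.1*u.2*v.2) * ha
      · linear_combination
          (u.1*u.2*u.2*v.2 - u.1*u.1*u.2*v.1 - b*u.1*u.1*u.2*v.1 + 2*a*u.1*u.1*u.2*v.1) * hb +
          (-(u.2*u.2*u.2*v.1) + u.1*u.2*u.2*v.2 + a*u.2*u.2*u.2*v.1 - a*u.1*u.1*u.2*v.1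
            - a*b*u.1*u.1*u.2*v.1 + 2*a*a*u.1*u.1*u.2*v.1) * ha
    rintro ⟨hb1, ha, hb2 | hb2⟩ <;> subst hb1 ha hb2 <;>
      exact key _ _ (by rw [mul_one_div]; exact div_self h2) (by ring)
end

section
/- Let F be a field of characteristic ≠ 2,3 and α₁, β₁ ∈ F. The 2-dimensional algebra with basis e1, e2 and multiplication e1·e1 = α₁·e1 + β₁·e2, e1·e2 = (1-α₁)·e2, e2·e1 = -α₁·e2, e2·e2 = e1 does NOT satisfy the Jordan identity; i.e., there exist u,v with (u·v)·u² ≠ u·(v·u²). -/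
theorem stmt15 (F : Type*) [Field F] (h2 : (2 : F) ≠ 0) (h3 : (3 : F) ≠ 0) (α₁ β₁ : F) :
    ∃ u v : F × F, mul2 (α₁) (0) (0) (1) (β₁) (1-α₁) (-α₁) (0) (mul2 (α₁) (0) (0) (1) (β₁) (1-α₁) (-α₁) (0) u v) (mul2 (α₁) (0) (0) (1) (β₁) (1-α₁) (-α₁) (0) u u) ≠ mul2 (α₁) (0) (0) (1) (β₁) (1-α₁) (-α₁) (0) u (mul2 (α₁) (0) (0) (1) (β₁) (1-α₁) (-α₁) (0) v (mul2 (α₁) (0) (0) (1) (β₁) (1-α₁) (-α₁) (0) u u)) := by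
  by_cases hb : β₁ = 0
  · by_cases ha : α₁ = 0
    · refine ⟨(1, 1), (0, 1), fun h => ?_⟩
      subst hb ha
      have h1 := congrArg Prod.fst h
      simp only [mul2] at h1
      exact one_ne_zero (α := F) (by linear_combination h1)
    · refine ⟨(0, 1), (1, 0), fun h => ?_⟩
      subst hb
      have h2' := congrArg Prod.snd h
      simp only [mul2] at h2'
      have h4 : (2 : F) * 2 * (α₁ * α₁) = 0 := by linear_combination 2*h2'
      rcases mul_eq_zero.1 h4 with h5 | h5
      · exact mul_ne_zero h2 h2 h5
      · rcases mul_eq_zero.1 h5 with h6 | h6 <;> exact ha h6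
  · refine ⟨(0, 1), (1, 0), fun h => ?_⟩
    have h1 := congrArg Prod.fst h
    simp only [mul2] at h1
    exact hb (by linear_combination -h1)
end

section
/- For α ∈ ℝ, the real 2-dimensional algebra with MSC e1·e1 = α·e1, e1·e2 = β·e2, e2·e1 = (1-α)·e2, e2·e2 = 0, where β = √(α - α²), is well-defined (α - α² ≥ 0) if and only if 0 ≤ α ≤ 1, and for every such α it is a Jordan algebra. -/
theorem stmt17 (α : ℝ) :
    (0 ≤ α - α^2 ↔ 0 ≤ α ∧ α ≤ 1) ∧
      (0 ≤ α → α ≤ 1 →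
        ∀ u v : ℝ × ℝ, mul2 (α) (0) (0) (0) (0) (Real.sqrt (α - α^2)) (1-α) (0) (mul2 (α) (0) (0) (0) (0) (Real.sqrt (α - α^2)) (1-α) (0) u v) (mul2 (α) (0) (0) (0) (0) (Real.sqrt (α - α^2)) (1-α) (0) u u) = mul2 (α) (0) (0) (0) (0) (Real.sqrt (α - α^2)) (1-α) (0) u (mul2 (α) (0) (0) (0) (0) (Real.sqrt (α - α^2)) (1-α) (0) v (mul2 (α) (0) (0) (0) (0) (Real.sqrt (α - α^2)) (1-α) (0) u u))) := by
  constructor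
  · constructor
    · intro h
      constructor <;> nlinarith [sq_nonneg α, sq_nonneg (α - 1)]
    · rintro ⟨h0, h1⟩
      nlinarith
  · intro h0 h1 u v
    have hb : Real.sqrt (α - α^2) ^ 2 = α - α^2 :=
      Real.sq_sqrt (by nlinarith)
    set β := Real.sqrt (α - α^2) with hβ
    simp only [mul2, Prod.mk.injEq]
    refine ⟨by ring, ?_⟩
    linear_combination ((α - β - (1 - α)) * u.1 ^ 2 * u.2 * v.1) * hb
end

section
/- Let F be a field of characteristic ≠ 2,3, and let A be a commutative 2-dimensional algebra with basis e1,e2, multiplication e1·e1 = α·e1, e1·e2 = e2·e1 = β·e2, e2·e2 = 0 (α, β ∈ F). If α = 2β then A satisfies the Jordan identity (u·v)·u² = u·(v·u²). -/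
theorem stmt19 (F : Type*) [Field F] (h2 : (2 : F) ≠ 0) (h3 : (3 : F) ≠ 0) (α β : F) (h : α = 2*β) :
    ∀ u v : F × F, mul2 (α) (0) (0) (0) (0) (β) (β) (0) (mul2 (α) (0) (0) (0) (0) (β) (β) (0) u v) (mul2 (α) (0) (0) (0) (0) (β) (β) (0) u u) = mul2 (α) (0) (0) (0) (0) (β) (β) (0) u (mul2 (α) (0) (0) (0) (0) (β) (β) (0) v (mul2 (α) (0) (0) (0) (0) (β) (β) (0) u u)) := by
  subst h
  intro u v
  simp only [mul2, Prod.mk.injEq]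
  constructor <;> ring
end
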